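/- arXiv:1211.2481 — 2 statements merged into one kernel-verified Lean document; each statement's English description precedes it below -/
import Mathlib

section
/- For a completely randomized assignment and any nonempty subset A ⊆ {1,…,K}, the sampling variance of the estimated factorial effect is Var(τ̂_A) = (1/(2^{2(K−1)} r)) Σ_z S²(z) − (1/N) S_A², where the sum is over all 2^K treatment combinations z. -/
open Finset

noncomputable section

/-- A treatment combination in a 2^K factorial design: each of the K factors
is at its low level (`false`, coded −1) or high level (`true`, coded +1). -/
abbrev Combo (K : ℕ) := Fin K → Bool

/-- The completely randomized assignments: each of the 2^K treatment
combinations receives exactly `r` of the `N` units. -/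
def Assignments (K N r : ℕ) : Finset (Fin N → Combo K) :=
  Finset.univ.filter (fun ω => ∀ z : Combo K, (Finset.univ.filter (fun i => ω i = z)).card = r)

/-- Expectation over the uniform distribution on completely randomized assignments. -/
def expect (K N r : ℕ) (f : (Fin N → Combo K) → ℝ) : ℝ :=
  (∑ ω ∈ Assignments K N r, f ω) / ((Assignments K N r).card : ℝ)

/-- Variance over the uniform distribution on completely randomized assignments. -/
def variance (K N r : ℕ) (f : (Fin N → Combo K) → ℝ) : ℝ :=
  expect K N r (fun ω => (f ω - expect K N r f) ^ 2)

/-- Covariance over the uniform distribution on completely randomized assignments. -/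
def covariance (K N r : ℕ) (f g : (Fin N → Combo K) → ℝ) : ℝ :=
  expect K N r (fun ω => (f ω - expect K N r f) * (g ω - expect K N r g))

/-- The assignment indicator W_i(z). -/
def Wvar (K N : ℕ) (ω : Fin N → Combo K) (i : Fin N) (z : Combo K) : ℝ :=
  if ω i = z then 1 else 0

/-- The population mean Ȳ(z) of the potential outcomes under z. -/
def Ybar (K N : ℕ) (Y : Fin N → Combo K → ℝ) (z : Combo K) : ℝ :=
  (∑ i, Y i z) / (N : ℝ)

/-- The observed treatment mean Ȳ^obs(z) = (1/r) Σ_{i : W_i(z)=1} Y_i(z). -/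
def YbarObs (K N r : ℕ) (Y : Fin N → Combo K → ℝ)
    (ω : Fin N → Combo K) (z : Combo K) : ℝ :=
  (∑ i, if ω i = z then Y i z else 0) / (r : ℝ)

/-- Finite-population variance S²(z) (divisor N−1). -/
def Ssq (K N : ℕ) (Y : Fin N → Combo K → ℝ) (z : Combo K) : ℝ :=
  (∑ i, (Y i z - Ybar K N Y z) ^ 2) / ((N : ℝ) - 1)

/-- Finite-population covariance S²(z, z*) (divisor N−1). -/
def Scov (K N : ℕ) (Y : Fin N → Combo K → ℝ) (z zs : Combo K) : ℝ :=
  (∑ i, (Y i z - Ybar K N Y z) * (Y i zs - Ybar K N Y zs)) / ((N : ℝ) - 1)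

/-- The contrast g_A(z) = Π_{k ∈ A} z_k ∈ {−1, +1}. -/
def gA (K : ℕ) (A : Finset (Fin K)) (z : Combo K) : ℝ :=
  ∏ k ∈ A, (if z k then (1 : ℝ) else -1)

/-- The unit-level factorial effect τ_{iA} = 2^{−(K−1)} Σ_z g_A(z) Y_i(z). -/
def tauUnit (K N : ℕ) (Y : Fin N → Combo K → ℝ) (A : Finset (Fin K)) (i : Fin N) : ℝ :=
  (∑ z : Combo K, gA K A z * Y i z) / (2 : ℝ) ^ (K - 1)

/-- The population-level factorial effect τ̄_A = (1/N) Σ_i τ_{iA}. -/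
def tauBar (K N : ℕ) (Y : Fin N → Combo K → ℝ) (A : Finset (Fin K)) : ℝ :=
  (∑ i, tauUnit K N Y A i) / (N : ℝ)

/-- The estimated factorial effect τ̂_A = 2^{−(K−1)} Σ_z g_A(z) Ȳ^obs(z). -/
def tauHat (K N r : ℕ) (Y : Fin N → Combo K → ℝ) (A : Finset (Fin K))
    (ω : Fin N → Combo K) : ℝ :=
  (∑ z : Combo K, gA K A z * YbarObs K N r Y ω z) / (2 : ℝ) ^ (K - 1)

/-- The finite-population variance S_A² of the unit-level factorial effects. -/
def SsqA (K N : ℕ) (Y : Fin N → Combo K → ℝ) (A : Finset (Fin K)) : ℝ :=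
  (∑ i, (tauUnit K N Y A i - tauBar K N Y A) ^ 2) / ((N : ℝ) - 1)

/-- Strict additivity: unit-level differences of potential outcomes between any
two treatment combinations are constant across units. -/
def StrictAdditivity (K N : ℕ) (Y : Fin N → Combo K → ℝ) : Prop :=
  ∀ z zs : Combo K, ∀ i i' : Fin N, Y i z - Y i zs = Y i' z - Y i' zs

/-- Compound symmetry: common variance S² > 0 and common correlation ρ,
i.e. S²(z) = S² for all z and S²(z,z*) = ρ S² for all z ≠ z*. -/
def CompoundSymmetry (K N : ℕ) (Y : Fin N → Combo K → ℝ) (S2 ρ : ℝ) : Prop :=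
  0 < S2 ∧ (∀ z : Combo K, Ssq K N Y z = S2) ∧
    ∀ z zs : Combo K, z ≠ zs → Scov K N Y z zs = ρ * S2

/-!
Write `τ̂_A = (1/r) ∑ᵢ a(ωᵢ) Yᵢ(ωᵢ)` with `a(z) = g_A(z) / 2^(K-1)`: a sum of one term per
unit, each depending only on that unit's treatment. The uniform law on assignments is invariant
under permuting the units, so averaging the counting identity `∑ᵢ g(ωᵢ) = r ∑_z g(z)` over units
gives `N 𝔼[g(ωᵢ)] = r ∑_z g(z)`, and averaging its two-unit analogue over ordered pairs gives,
for `i ≠ j`, `N (N-1) 𝔼[g(ωᵢ) h(ωⱼ)] = r² (∑ g)(∑ h) - r ∑ g h`. Expanding the square yields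
Neyman's formula `Var ∑ᵢ f(i, ωᵢ) = r ∑_z S²(f(·, z)) - (r²/N) S²(∑_z f(·, z))` for arbitrary
`f`; with `f(i, z) = a(z) Yᵢ(z)` and `a(z)² = 2^(-2(K-1))` this is the theorem.
-/

open scoped BigOperators

def finitePopVariance {N : ℕ} (x : Fin N → ℝ) : ℝ :=
  (∑ i, (x i - (∑ j, x j) / N) ^ 2) / (N - 1)

theorem finitePopVariance_eq {N : ℕ} (x : Fin N → ℝ) :
    finitePopVariance x = (∑ i, x i ^ 2 - (∑ i, x i) ^ 2 / N) / (N - 1) := by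
  rcases N.eq_zero_or_pos with rfl | hpos
  · simp [finitePopVariance]
  have hN : (N : ℝ) ≠ 0 := by positivity
  simp only [finitePopVariance, sub_sq, Finset.sum_add_distrib, Finset.sum_sub_distrib,
    ← Finset.sum_mul, ← Finset.mul_sum, Finset.sum_const, Finset.card_univ, Fintype.card_fin,
    nsmul_eq_mul]
  field_simp
  ring

theorem finitePopVariance_const_mul {N : ℕ} (c : ℝ) (x : Fin N → ℝ) :
    finitePopVariance (fun i => c * x i) = c ^ 2 * finitePopVariance x := by
  simp only [finitePopVariance_eq, mul_pow, ← Finset.mul_sum]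
  ring

theorem gA_sq (K : ℕ) (A : Finset (Fin K)) (z : Combo K) : gA K A z ^ 2 = 1 := by
  simp only [gA, ← Finset.prod_pow]
  exact Finset.prod_eq_one fun k _ => by split <;> norm_num

namespace CompletelyRandomized

variable {K N r : ℕ}

theorem expect_eq_finsetExpect (f : (Fin N → Combo K) → ℝ) :
    expect K N r f = 𝔼 ω ∈ Assignments K N r, f ω :=
  (Finset.expect_eq_sum_div_card _ _).symm

theorem expect_sum {ι : Type*} (s : Finset ι) (F : ι → (Fin N → Combo K) → ℝ) :
    expect K N r (fun ω => ∑ x ∈ s, F x ω) = ∑ x ∈ s, expect K N r (F x) := by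
  simp only [expect_eq_finsetExpect, Finset.expect_sum_comm]

theorem mem_assignments {ω : Fin N → Combo K} :
    ω ∈ Assignments K N r ↔ ∀ z, #{i | ω i = z} = r := by
  simp [Assignments]

theorem assignments_nonempty (hN : N = r * 2 ^ K) : (Assignments K N r).Nonempty := by
  have e : Fin N ≃ Fin r × Combo K := Fintype.equivOfCardEq (by simp [hN])
  refine ⟨fun i => (e i).2, mem_assignments.2 fun z => ?_⟩
  calc #{i | (e i).2 = z} = #{p : Fin r × Combo K | p.2 = z} := Finset.card_equiv e (by simp)
    _ = r := by rw [Finset.card_filter, Fintype.sum_prod_type]; simp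

theorem comp_perm_mem_assignments (σ : Equiv.Perm (Fin N)) {ω : Fin N → Combo K}
    (hω : ω ∈ Assignments K N r) : ω ∘ σ ∈ Assignments K N r :=
  mem_assignments.2 fun z => (mem_assignments.1 hω z) ▸ Finset.card_equiv σ (by simp)

theorem expect_comp_perm (σ : Equiv.Perm (Fin N)) (f : (Fin N → Combo K) → ℝ) :
    expect K N r (fun ω => f (ω ∘ σ)) = expect K N r f := by
  simp only [expect_eq_finsetExpect]
  exact Finset.expect_nbij' (· ∘ σ) (· ∘ σ.symm) (fun ω => comp_perm_mem_assignments σ)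
    (fun ω => comp_perm_mem_assignments σ.symm) (fun ω _ => by ext; simp)
    (fun ω _ => by ext; simp) (fun _ _ => rfl)

theorem sum_apply_of_mem {ω : Fin N → Combo K} (hω : ω ∈ Assignments K N r)
    (g : Combo K → ℝ) : ∑ i, g (ω i) = r * ∑ z, g z := by
  rw [← Finset.sum_fiberwise univ ω, Finset.mul_sum]
  refine Finset.sum_congr rfl fun z _ => ?_
  rw [Finset.sum_congr rfl fun i hi => congrArg g (Finset.mem_filter.1 hi).2, Finset.sum_const,
    mem_assignments.1 hω z, nsmul_eq_mul]

theorem expect_apply (hne : (Assignments K N r).Nonempty) (i : Fin N) (g : Combo K → ℝ) :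
    N * expect K N r (fun ω => g (ω i)) = r * ∑ z, g z := by
  have hsymm (j : Fin N) : expect K N r (fun ω => g (ω j)) = expect K N r (fun ω => g (ω i)) := by
    simpa using expect_comp_perm (r := r) (Equiv.swap i j) (fun ω => g (ω i))
  simp only [expect_eq_finsetExpect] at hsymm ⊢
  calc (N : ℝ) * 𝔼 ω ∈ Assignments K N r, g (ω i)
      = ∑ j, 𝔼 ω ∈ Assignments K N r, g (ω j) := by simp [hsymm]
    _ = 𝔼 ω ∈ Assignments K N r, ∑ j, g (ω j) := (Finset.expect_sum_comm _ _ _).symm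
    _ = r * ∑ z, g z := by
      rw [Finset.expect_congr rfl fun ω hω => sum_apply_of_mem hω g, Finset.expect_const hne]

theorem expect_apply_mul_apply (hne : (Assignments K N r).Nonempty) {i j : Fin N} (hij : i ≠ j)
    (g h : Combo K → ℝ) :
    N * (N - 1) * expect K N r (fun ω => g (ω i) * h (ω j)) =
      r ^ 2 * (∑ z, g z) * (∑ z, h z) - r * ∑ z, g z * h z := by
  have hsymm {i' j' : Fin N} (hij' : i' ≠ j') : expect K N r (fun ω => g (ω i') * h (ω j')) =
      expect K N r (fun ω => g (ω i) * h (ω j)) := by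
    obtain ⟨σ, hσi, hσj⟩ := MulAction.is_two_pretransitive_iff.mp
      (Equiv.Perm.isMultiplyPretransitive (Fin N) 2) hij hij'
    rw [← expect_comp_perm σ (fun ω => g (ω i) * h (ω j))]
    simp [← hσi, ← hσj, Equiv.Perm.smul_def]
  have hpairs {ω : Fin N → Combo K} (hω : ω ∈ Assignments K N r) :
      ∑ i', ∑ j' ∈ univ.erase i', g (ω i') * h (ω j') =
        r ^ 2 * (∑ z, g z) * (∑ z, h z) - r * ∑ z, g z * h z := by
    simp only [← Finset.mul_sum, Finset.sum_erase_eq_sub (Finset.mem_univ _),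
      sum_apply_of_mem hω h, Finset.sum_sub_distrib, ← Finset.sum_mul,
      sum_apply_of_mem hω g, sum_apply_of_mem hω (fun z => g z * h z)]
    ring
  simp only [expect_eq_finsetExpect] at hsymm ⊢
  calc (N : ℝ) * (N - 1) * 𝔼 ω ∈ Assignments K N r, g (ω i) * h (ω j)
      = ∑ i', ∑ j' ∈ univ.erase i', 𝔼 ω ∈ Assignments K N r, g (ω i') * h (ω j') := by
        rw [Finset.sum_congr rfl fun i' _ => Finset.sum_congr rfl fun j' hj' =>
          hsymm (Finset.ne_of_mem_erase hj').symm]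
        simp [Finset.card_erase_of_mem, Nat.cast_pred (Fin.pos i), mul_assoc]
    _ = 𝔼 ω ∈ Assignments K N r, ∑ i', ∑ j' ∈ univ.erase i', g (ω i') * h (ω j') := by
        simp only [Finset.expect_sum_comm]
    _ = r ^ 2 * (∑ z, g z) * (∑ z, h z) - r * ∑ z, g z * h z := by
      rw [Finset.expect_congr rfl fun ω hω => hpairs hω, Finset.expect_const hne]

theorem variance_eq_expect_sq_sub (hne : (Assignments K N r).Nonempty)
    (f : (Fin N → Combo K) → ℝ) :
    variance K N r f = expect K N r (fun ω => f ω ^ 2) - expect K N r f ^ 2 := by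
  simp only [variance, expect_eq_finsetExpect]
  simp_rw [sub_sq, Finset.expect_add_distrib, Finset.expect_sub_distrib, ← Finset.expect_mul,
    ← Finset.mul_expect, Finset.expect_const hne]
  ring

theorem variance_div_const (f : (Fin N → Combo K) → ℝ) (c : ℝ) :
    variance K N r (fun ω => f ω / c) = variance K N r f / c ^ 2 := by
  simp only [variance, expect_eq_finsetExpect]
  simp_rw [← Finset.expect_div, ← sub_div, div_pow]
  exact (Finset.expect_div _ _ _).symm

theorem variance_sum_apply (hne : (Assignments K N r).Nonempty) (hN : 2 ≤ N)
    (f : Fin N → Combo K → ℝ) :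
    variance K N r (fun ω => ∑ i, f i (ω i)) =
      r * ∑ z, finitePopVariance (f · z) - r ^ 2 / N * finitePopVariance (fun i => ∑ z, f i z) := by
  have hN₀ : (N : ℝ) ≠ 0 := by positivity
  have hN₁ : (N : ℝ) - 1 ≠ 0 := by
    have : (2 : ℝ) ≤ N := by exact_mod_cast hN
    linarith
  set u : Fin N → ℝ := fun i => ∑ z, f i z
  have hmean : N * expect K N r (fun ω => ∑ i, f i (ω i)) = r * ∑ i, u i := by
    rw [expect_sum, Finset.mul_sum, Finset.mul_sum]
    exact Finset.sum_congr rfl fun i _ => expect_apply hne i (f i)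
  have hpair (i j : Fin N) : N * (N - 1) * expect K N r (fun ω => f i (ω i) * f j (ω j)) =
      r ^ 2 * u i * u j - r * ∑ z, f i z * f j z +
        if i = j then N * r * ∑ z, f i z * f j z - r ^ 2 * u i * u j else 0 := by
    rcases eq_or_ne i j with rfl | hij
    · rw [mul_right_comm, expect_apply hne i (fun z => f i z * f i z), if_pos rfl]
      ring
    · rw [expect_apply_mul_apply hne hij, if_neg hij]
      ring
  have hsq : N * (N - 1) * expect K N r (fun ω => (∑ i, f i (ω i)) ^ 2) =
      r ^ 2 * (∑ i, u i) ^ 2 - r * ∑ z, (∑ i, f i z) ^ 2 +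
        (N * r * ∑ i, ∑ z, f i z ^ 2 - r ^ 2 * ∑ i, u i ^ 2) := by
    have hsplit : ∑ i, ∑ j, N * (N - 1) * expect K N r (fun ω => f i (ω i) * f j (ω j)) =
        ∑ i, ∑ j, (r ^ 2 * u i * u j - r * ∑ z, f i z * f j z) +
          ∑ i, (N * r * ∑ z, f i z * f i z - r ^ 2 * u i * u i) := by
      simp only [hpair, Finset.sum_add_distrib, Finset.sum_ite_eq, Finset.mem_univ, if_true]
    have hcross : ∑ i, ∑ j, ∑ z, f i z * f j z = ∑ z, (∑ i, f i z) ^ 2 := by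
      calc ∑ i, ∑ j, ∑ z, f i z * f j z = ∑ i, ∑ z, ∑ j, f i z * f j z :=
            Finset.sum_congr rfl fun i _ => Finset.sum_comm
        _ = ∑ z, ∑ i, ∑ j, f i z * f j z := Finset.sum_comm
        _ = ∑ z, (∑ i, f i z) ^ 2 := by simp only [sq, Finset.sum_mul_sum]
    calc N * (N - 1) * expect K N r (fun ω => (∑ i, f i (ω i)) ^ 2)
        = ∑ i, ∑ j, N * (N - 1) * expect K N r (fun ω => f i (ω i) * f j (ω j)) := by
          simp_rw [sq, Finset.sum_mul_sum]
          simp only [expect_sum, Finset.mul_sum]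
      _ = _ := by
          rw [hsplit]
          simp only [Finset.sum_sub_distrib, ← Finset.mul_sum, mul_assoc, ← Finset.sum_mul, hcross,
            sq]
  have hE₁ : expect K N r (fun ω => ∑ i, f i (ω i)) = r * (∑ i, u i) / N := by
    rw [← hmean]; field_simp
  have hE₂ : expect K N r (fun ω => (∑ i, f i (ω i)) ^ 2) =
      (r ^ 2 * (∑ i, u i) ^ 2 - r * ∑ z, (∑ i, f i z) ^ 2 +
        (N * r * ∑ i, ∑ z, f i z ^ 2 - r ^ 2 * ∑ i, u i ^ 2)) / (N * (N - 1)) := by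
    rw [← hsq]; field_simp
  rw [variance_eq_expect_sq_sub hne, hE₁, hE₂]
  simp only [finitePopVariance_eq, ← Finset.sum_div, Finset.sum_sub_distrib]
  rw [Finset.sum_comm (f := fun z i => f i z ^ 2)]
  field_simp
  ring

theorem sum_mul_YbarObs (Y : Fin N → Combo K → ℝ) (ω : Fin N → Combo K)
    (a : Combo K → ℝ) : ∑ z, a z * YbarObs K N r Y ω z = (∑ i, a (ω i) * Y i (ω i)) / r := by
  simp only [YbarObs, mul_div_assoc', ← Finset.sum_div, Finset.mul_sum, mul_ite, mul_zero]
  rw [Finset.sum_comm]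
  simp [Finset.sum_ite_eq]

end CompletelyRandomized

open CompletelyRandomized

theorem tauHat_variance_general (K N r : ℕ) (hK : 1 ≤ K) (hr : 0 < r) (hN : N = r * 2 ^ K)
    (Y : Fin N → Combo K → ℝ) (A : Finset (Fin K)) :
    variance K N r (tauHat K N r Y A) =
      (1 / ((2 : ℝ) ^ (2 * (K - 1)) * (r : ℝ))) * (∑ z : Combo K, Ssq K N Y z) -
        (1 / (N : ℝ)) * SsqA K N Y A := by
  have hN₂ : 2 ≤ N := hN ▸ Nat.mul_le_mul hr (Nat.pow_le_pow_right two_pos hK)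
  set a : Combo K → ℝ := fun z => gA K A z / 2 ^ (K - 1)
  have hτ : tauHat K N r Y A = fun ω => (∑ i, a (ω i) * Y i (ω i)) / r := by
    funext ω
    rw [← sum_mul_YbarObs, tauHat, Finset.sum_div]
    exact Finset.sum_congr rfl fun z _ => div_mul_eq_mul_div _ _ _ |>.symm
  have hS (z : Combo K) :
      finitePopVariance (fun i => a z * Y i z) = Ssq K N Y z / 2 ^ (2 * (K - 1)) := by
    rw [finitePopVariance_const_mul, div_pow, gA_sq, ← pow_mul, mul_comm (K - 1)]
    exact one_div_mul_eq_div _ _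
  have hSA : SsqA K N Y A = finitePopVariance (fun i => ∑ z, a z * Y i z) := by
    have : tauUnit K N Y A = fun i => ∑ z, a z * Y i z := by
      funext i
      rw [tauUnit, Finset.sum_div]
      exact Finset.sum_congr rfl fun z _ => div_mul_eq_mul_div _ _ _ |>.symm
    simp only [SsqA, tauBar, this, finitePopVariance]
  rw [hτ, variance_div_const,
    variance_sum_apply (assignments_nonempty hN) hN₂ fun i z => a z * Y i z, hSA]
  simp only [hS, ← Finset.sum_div]
  field_simp

/-- Theorem 2. Var(τ̂_A) = (1/(2^{2(K−1)} r)) Σ_z S²(z) − (1/N) S_A². -/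
theorem tauHat_variance (K N r : ℕ) (hK : 1 ≤ K) (hr : 0 < r) (hN : N = r * 2 ^ K)
    (Y : Fin N → Combo K → ℝ) (A : Finset (Fin K)) (hA : A.Nonempty) :
    variance K N r (tauHat K N r Y A) =
      (1 / ((2 : ℝ) ^ (2 * (K - 1)) * (r : ℝ))) * (∑ z : Combo K, Ssq K N Y z) -
        (1 / (N : ℝ)) * SsqA K N Y A :=
  tauHat_variance_general K N r hK hr hN Y A
end
end

section
/- Under compound symmetry with common variance S² and common correlation ρ, for every nonempty subset A ⊆ {1,…,K} the sampling variance of the estimated factorial effect under a completely randomized assignment is Var(τ̂_A) = (4/N) (1 − (1−ρ)/2^K) S². -/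
open Finset

noncomputable section

/-!
`τ̂_A` is the linear combination `∑_z c_z Ȳ^obs(z)` with `c_z = g_A(z) / 2^(K-1)`, so its variance is
the quadratic form `∑_{z,z'} c_z c_z' Cov(Ȳ^obs(z), Ȳ^obs(z'))`. The uniform distribution on
assignments is invariant under permutations of the units, which gives `E W_i(z) = r/N` and, for
`i ≠ j`, `E W_i(z) W_j(z') = r (r - δ_{zz'}) / (N (N-1))`; hence Neyman's formula
`Cov(Ȳ^obs(z), Ȳ^obs(z')) = (δ_{zz'}/r - 1/N) S²(z,z')`. Under compound symmetry the quadratic form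
only involves `∑_z g_A(z) = 0` and `∑_z g_A(z)² = 2^K`.
-/

lemma sum_sum_mul_ite_eq {ι : Type*} [Fintype ι] [DecidableEq ι] (a b : ι → ℝ) (p q : ℝ) :
    ∑ i, ∑ j, a i * b j * (if i = j then p else q)
      = (p - q) * ∑ i, a i * b i + q * ((∑ i, a i) * ∑ j, b j) := by
  have h : ∀ i j, a i * b j * (if i = j then p else q)
      = (if i = j then (p - q) * (a i * b j) else 0) + q * (a i * b j) := by
    intro i j; split_ifs <;> ring
  simp only [h, sum_add_distrib, sum_ite_eq, mem_univ, if_true, ← mul_sum, sum_mul_sum]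

lemma gA_mul_self (K : ℕ) (A : Finset (Fin K)) (z : Combo K) : gA K A z * gA K A z = 1 := by
  rw [gA, ← prod_mul_distrib]
  exact prod_eq_one fun k _ => by split_ifs <;> norm_num

lemma sum_gA_mul_self (K : ℕ) (A : Finset (Fin K)) :
    ∑ z : Combo K, gA K A z * gA K A z = 2 ^ K := by
  simp [gA_mul_self]

lemma sum_gA_eq_zero {K : ℕ} {A : Finset (Fin K)} (hA : A.Nonempty) :
    ∑ z : Combo K, gA K A z = 0 := by
  obtain ⟨k, hk⟩ := hA
  have h : ∀ z : Combo K,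
      gA K A z = ∏ l, if l ∈ A then (if z l then (1 : ℝ) else -1) else 1 := fun z =>
    (prod_ite_mem_eq ..).symm
  simp_rw [h]
  rw [← Fintype.prod_sum fun l (b : Bool) => if l ∈ A then (if b then (1 : ℝ) else -1) else 1]
  exact prod_eq_zero (mem_univ k) (by simp [hk])

lemma Scov_eq_sum_mul_sub {K N : ℕ} (Y : Fin N → Combo K → ℝ) (z z' : Combo K) :
    Scov K N Y z z'
      = (∑ i, Y i z * Y i z' - (∑ i, Y i z) * (∑ i, Y i z') / N) / (N - 1) := by
  rcases Nat.eq_zero_or_pos N with rfl | hN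
  · simp [Scov]
  have hN0 : (N : ℝ) ≠ 0 := by positivity
  simp only [Scov, Ybar, sub_mul, mul_sub, sum_sub_distrib, ← sum_mul, ← mul_sum, sum_const,
    card_univ, Fintype.card_fin, nsmul_eq_mul]
  field_simp
  ring

lemma Scov_self {K N : ℕ} (Y : Fin N → Combo K → ℝ) (z : Combo K) :
    Scov K N Y z z = Ssq K N Y z := by
  simp only [Scov, Ssq, sq]

open scoped BigOperators

section Randomization

variable {K N r : ℕ}

lemma expect_eq_finsetExpect (f : (Fin N → Combo K) → ℝ) :
    expect K N r f = 𝔼 ω ∈ Assignments K N r, f ω :=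
  (expect_eq_sum_div_card _ _).symm

lemma assignments_nonempty (hN : N = r * 2 ^ K) : (Assignments K N r).Nonempty := by
  have hcard : Fintype.card (Combo K) = 2 ^ K := by simp
  let e : Fin N ≃ Fin r × Combo K :=
    (finCongr hN).trans (finProdFinEquiv.symm.trans
      (Equiv.prodCongr (Equiv.refl _) (Fintype.equivFinOfCardEq hcard).symm))
  refine ⟨fun i => (e i).2, ?_⟩
  simp only [Assignments, mem_filter, mem_univ, true_and]
  intro z
  refine (card_nbij' (t := (univ : Finset (Fin r))) (fun i => (e i).1) (fun a => e.symm (a, z))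
    (by simp) (by simp) (fun i hi => ?_) (fun a _ => by simp)).trans (by simp)
  simp only [mem_coe, mem_filter, mem_univ, true_and] at hi
  simp [← hi]

lemma expect_congr_assignments {f g : (Fin N → Combo K) → ℝ}
    (h : ∀ ω ∈ Assignments K N r, f ω = g ω) : expect K N r f = expect K N r g := by
  simp only [expect_eq_finsetExpect, expect_congr rfl h]

lemma expect_eq_of_forall_mem (hN : N = r * 2 ^ K) {f : (Fin N → Combo K) → ℝ} {a : ℝ}
    (hf : ∀ ω ∈ Assignments K N r, f ω = a) : expect K N r f = a := by
  rw [expect_congr_assignments hf, expect_eq_finsetExpect,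
    Finset.expect_const (assignments_nonempty hN)]

lemma expect_sum {ι : Type*} (s : Finset ι) (f : ι → (Fin N → Combo K) → ℝ) :
    expect K N r (fun ω => ∑ x ∈ s, f x ω) = ∑ x ∈ s, expect K N r (f x) := by
  simp only [expect_eq_finsetExpect, expect_sum_comm]

lemma expect_const_mul (a : ℝ) (f : (Fin N → Combo K) → ℝ) :
    expect K N r (fun ω => a * f ω) = a * expect K N r f := by
  simp only [expect_eq_finsetExpect, mul_expect]

lemma covariance_eq_expect_mul_sub (hN : N = r * 2 ^ K) (f g : (Fin N → Combo K) → ℝ) :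
    covariance K N r f g
      = expect K N r (fun ω => f ω * g ω) - expect K N r f * expect K N r g := by
  have hne := assignments_nonempty hN
  simp only [covariance, expect_eq_finsetExpect, sub_mul, mul_sub, expect_sub_distrib,
    ← mul_expect, ← expect_mul, Finset.expect_const hne]
  ring

lemma variance_sum_mul {ι : Type*} (s : Finset ι) (c : ι → ℝ)
    (X : ι → (Fin N → Combo K) → ℝ) :
    variance K N r (fun ω => ∑ z ∈ s, c z * X z ω)
      = ∑ z ∈ s, ∑ z' ∈ s, c z * c z' * covariance K N r (X z) (X z') := by
  have hdev : ∀ ω, ∑ z ∈ s, c z * X z ω - expect K N r (fun ω => ∑ z ∈ s, c z * X z ω)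
      = ∑ z ∈ s, c z * (X z ω - expect K N r (X z)) := by
    intro ω
    simp only [expect_sum, expect_const_mul, mul_sub, sum_sub_distrib]
  simp only [variance, covariance, hdev, sq, sum_mul_sum, ← expect_const_mul, ← expect_sum]
  congr 1; ext ω; congr 1; ext z; congr 1; ext z'; ring

lemma comp_perm_mem_assignments {ω : Fin N → Combo K} (hω : ω ∈ Assignments K N r)
    (σ : Equiv.Perm (Fin N)) : ω ∘ σ ∈ Assignments K N r := by
  simp only [Assignments, mem_filter, mem_univ, true_and] at hω ⊢
  intro z
  rw [← hω z]
  exact card_nbij' σ σ.symm (fun i hi => by simpa using hi) (fun i hi => by simpa using hi)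
    (fun i _ => by simp) (fun i _ => by simp)

lemma expect_comp_perm (σ : Equiv.Perm (Fin N)) (f : (Fin N → Combo K) → ℝ) :
    expect K N r (fun ω => f (ω ∘ σ)) = expect K N r f := by
  simp only [expect_eq_finsetExpect]
  exact expect_nbij' (· ∘ σ) (· ∘ σ.symm) (fun ω hω => comp_perm_mem_assignments hω σ)
    (fun ω hω => comp_perm_mem_assignments hω σ.symm)
    (fun ω _ => by ext; simp) (fun ω _ => by ext; simp) (fun ω _ => rfl)

lemma sum_Wvar_of_mem {ω : Fin N → Combo K} (hω : ω ∈ Assignments K N r) (z : Combo K) :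
    ∑ i, Wvar K N ω i z = r := by
  simp only [Assignments, mem_filter, mem_univ, true_and] at hω
  simp [Wvar, sum_boole, hω z]

lemma Wvar_mul_Wvar_self (ω : Fin N → Combo K) (i : Fin N) (z z' : Combo K) :
    Wvar K N ω i z * Wvar K N ω i z' = if z = z' then Wvar K N ω i z else 0 := by
  unfold Wvar
  split_ifs <;> simp_all

lemma expect_Wvar (hN : N = r * 2 ^ K) (i : Fin N) (z : Combo K) :
    expect K N r (fun ω => Wvar K N ω i z) = r / N := by
  have hsymm : ∀ j,
      expect K N r (fun ω => Wvar K N ω j z) = expect K N r (fun ω => Wvar K N ω i z) := by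
    intro j
    simpa [Wvar] using expect_comp_perm (Equiv.swap i j) (fun ω => Wvar K N ω i z)
  have htotal : ∑ j, expect K N r (fun ω => Wvar K N ω j z) = r := by
    rw [← expect_sum]
    exact expect_eq_of_forall_mem hN fun ω hω => sum_Wvar_of_mem hω z
  simp only [hsymm, sum_const, card_univ, Fintype.card_fin, nsmul_eq_mul] at htotal
  have hN0 : (N : ℝ) ≠ 0 := by have := i.pos; positivity
  rw [← htotal, mul_div_cancel_left₀ _ hN0]

lemma expect_Wvar_mul_Wvar_of_ne (hN : N = r * 2 ^ K) {i j : Fin N} (hij : i ≠ j)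
    (z z' : Combo K) :
    expect K N r (fun ω => Wvar K N ω i z * Wvar K N ω j z')
      = r * (r - if z = z' then 1 else 0) / (N * (N - 1)) := by
  have hsymm : ∀ j' ∈ univ.erase i, expect K N r (fun ω => Wvar K N ω i z * Wvar K N ω j' z')
      = expect K N r (fun ω => Wvar K N ω i z * Wvar K N ω j z') := by
    intro j' hj'
    simpa [Wvar, Equiv.swap_apply_of_ne_of_ne hij (ne_of_mem_erase hj').symm]
      using expect_comp_perm (r := r) (Equiv.swap j j')
        (fun ω => Wvar K N ω i z * Wvar K N ω j z')
  have htotal :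
      ∑ j' ∈ univ.erase i, expect K N r (fun ω => Wvar K N ω i z * Wvar K N ω j' z')
        = r * (r - if z = z' then 1 else 0) / N := by
    have hpoint : ∀ ω ∈ Assignments K N r,
        ∑ j' ∈ univ.erase i, Wvar K N ω i z * Wvar K N ω j' z'
          = (r - if z = z' then 1 else 0) * Wvar K N ω i z := by
      intro ω hω
      rw [← mul_sum, sum_erase_eq_sub (mem_univ i), sum_Wvar_of_mem hω, mul_sub,
        Wvar_mul_Wvar_self]
      split_ifs <;> ring
    rw [← expect_sum, expect_congr_assignments hpoint, expect_const_mul, expect_Wvar hN]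
    ring
  rw [sum_congr rfl hsymm, sum_const, card_erase_of_mem (mem_univ i), card_univ,
    Fintype.card_fin, nsmul_eq_mul, Nat.cast_pred i.pos] at htotal
  have hN1 : 1 < N := by simpa using Fintype.one_lt_card_iff.2 ⟨i, j, hij⟩
  have hN1' : (N : ℝ) - 1 ≠ 0 := sub_ne_zero.2 (by exact_mod_cast hN1.ne')
  rw [← div_div, ← htotal, mul_div_cancel_left₀ _ hN1']

end Randomization

section ObservedMeans

variable {K N r : ℕ}

lemma YbarObs_eq_sum_mul_Wvar (Y : Fin N → Combo K → ℝ) (ω : Fin N → Combo K)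
    (z : Combo K) :
    YbarObs K N r Y ω z = (∑ i, Y i z * Wvar K N ω i z) / r := by
  simp only [YbarObs, Wvar, mul_ite, mul_one, mul_zero]

lemma expect_YbarObs (hN : N = r * 2 ^ K) (hr : 0 < r) (Y : Fin N → Combo K → ℝ)
    (z : Combo K) : expect K N r (fun ω => YbarObs K N r Y ω z) = Ybar K N Y z := by
  have hN0 : (N : ℝ) ≠ 0 := by subst hN; positivity
  have hr0 : (r : ℝ) ≠ 0 := by positivity
  simp only [YbarObs_eq_sum_mul_Wvar, div_eq_inv_mul, expect_const_mul, expect_sum, expect_Wvar hN,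
    ← sum_mul, Ybar]
  field_simp

lemma expect_Wvar_mul_Wvar (hN : N = r * 2 ^ K) (i j : Fin N) (z z' : Combo K) :
    expect K N r (fun ω => Wvar K N ω i z * Wvar K N ω j z')
      = if i = j then (if z = z' then (r : ℝ) / N else 0)
        else r * (r - if z = z' then 1 else 0) / (N * (N - 1)) := by
  by_cases hij : i = j
  · subst hij
    simp only [Wvar_mul_Wvar_self, if_true]
    split_ifs
    · exact expect_Wvar hN i z
    · exact expect_eq_of_forall_mem hN fun _ _ => rfl
  · rw [if_neg hij, expect_Wvar_mul_Wvar_of_ne hN hij z z']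

lemma covariance_YbarObs (hN : N = r * 2 ^ K) (hN1 : 1 < N) (Y : Fin N → Combo K → ℝ)
    (z z' : Combo K) :
    covariance K N r (fun ω => YbarObs K N r Y ω z) (fun ω => YbarObs K N r Y ω z')
      = ((if z = z' then 1 / (r : ℝ) else 0) - 1 / N) * Scov K N Y z z' := by
  have hr : 0 < r := by rcases Nat.eq_zero_or_pos r with rfl | hr <;> simp_all
  have hmul : ∀ ω, YbarObs K N r Y ω z * YbarObs K N r Y ω z'
      = ((r : ℝ) * r)⁻¹ *
          ∑ i, ∑ j, (Y i z * Y j z') * (Wvar K N ω i z * Wvar K N ω j z') := by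
    intro ω
    rw [YbarObs_eq_sum_mul_Wvar, YbarObs_eq_sum_mul_Wvar, div_mul_div_comm, sum_mul_sum,
      div_eq_inv_mul]
    congr 1
    exact sum_congr rfl fun i _ => sum_congr rfl fun j _ => by ring
  rw [covariance_eq_expect_mul_sub hN, expect_YbarObs hN hr, expect_YbarObs hN hr]
  simp only [hmul, expect_const_mul, expect_sum, expect_Wvar_mul_Wvar hN, sum_sum_mul_ite_eq,
    Scov_eq_sum_mul_sub, Ybar]
  have hN0 : (N : ℝ) ≠ 0 := by positivity
  have hN1' : (N : ℝ) - 1 ≠ 0 := sub_ne_zero.2 (by exact_mod_cast hN1.ne')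
  have hr0 : (r : ℝ) ≠ 0 := by positivity
  split_ifs <;> field_simp <;> ring

end ObservedMeans

/-- Corollary 2. Under compound symmetry,
Var(τ̂_A) = (4/N) (1 − (1−ρ)/2^K) S². -/
theorem tauHat_variance_compound_symmetry (K N r : ℕ) (hK : 1 ≤ K) (hr : 0 < r)
    (hN : N = r * 2 ^ K) (Y : Fin N → Combo K → ℝ) (S2 ρ : ℝ)
    (hcs : CompoundSymmetry K N Y S2 ρ)
    (A : Finset (Fin K)) (hA : A.Nonempty) :
    variance K N r (tauHat K N r Y A) =
      (4 / (N : ℝ)) * (1 - (1 - ρ) / (2 : ℝ) ^ K) * S2 := by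
  obtain ⟨-, hSsq, hScov⟩ := hcs
  have hN1 : 1 < N := hN ▸ one_lt_mul_of_le_of_lt hr (Nat.one_lt_two_pow (by omega))
  have hcov : ∀ z z',
      covariance K N r (fun ω => YbarObs K N r Y ω z) (fun ω => YbarObs K N r Y ω z')
        = if z = z' then (1 / r - 1 / N) * S2 else -(1 / N) * (ρ * S2) := by
    intro z z'
    rw [covariance_YbarObs hN hN1]
    split_ifs with h
    · rw [h, Scov_self, hSsq]
    · rw [hScov z z' h, zero_sub, neg_mul]
  have htau :
      tauHat K N r Y A = fun ω => ∑ z, gA K A z / 2 ^ (K - 1) * YbarObs K N r Y ω z := by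
    ext ω
    simp only [tauHat, sum_div, div_mul_eq_mul_div]
  rw [htau, variance_sum_mul]
  simp only [hcov]
  rw [sum_sum_mul_ite_eq]
  simp only [div_mul_div_comm, ← sum_div, sum_gA_mul_self, sum_gA_eq_zero hA]
  have hNR : (N : ℝ) = r * 2 ^ K := by exact_mod_cast hN
  have hpow : (2 : ℝ) ^ K = 2 * 2 ^ (K - 1) := by rw [← pow_succ']; congr 1; omega
  rw [hNR, hpow]
  field_simp
  ring
end
end
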